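/- arXiv:2604.17645 — 5 statements merged into one kernel-verified Lean document; each statement's English description precedes it below -/
import Mathlib

section
/- Let g₀ : ℝⁿ → ℝ and g : ℝⁿ → ℝᵐ be twice continuously differentiable, and define the generalized Lagrangian L(q₀,q₁,q₂) := q₀·g₀(q₁) + ⟨q₂, g(q₁)⟩. Let q₀ : ℝ → ℝ, q₁ : ℝ → ℝⁿ, q₂ : ℝ → ℝᵐ be differentiable functions with derivatives u₀(t), u₁(t), u₂(t) respectively. Define q₃(t) := −∇_{q₁}L(q₀(t),q₁(t),q₂(t)), q₄(t) := g(q₁(t)), and q₅(t) := g₀(q₁(t)). Then q₃, q₄, q₅ are differentiable and for every t: q₃'(t) = −[∂²_{q₁}L(q₀(t),q₁(t),q₂(t))]·u₁(t) − u₀(t)·∇g₀(q₁(t)) − [Dg(q₁(t))]ᵀ·u₂(t), q₄'(t) = [Dg(q₁(t))]·u₁(t), and q₅'(t) = ⟨∇g₀(q₁(t)), u₁(t)⟩. -/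
open scoped RealInnerProductSpace

/-!
Each lifted variable is a composite of differentiable maps with the curves `q₀, q₁, q₂`, so
the chain rule applies. For `q₃` the point is that `∇_{q₁}L(a, x, y) = a • ∇g₀(x) + Dg(x)ᵀ y`
is linear in `(a, y)` for fixed `x`: its derivative along the curve splits into the partial
derivative in `x` (the Hessian term) plus the value of the same expression at `(u₀, u₂)`.
-/

section Regularity

variable {E F : Type*} [NormedAddCommGroup E] [InnerProductSpace ℝ E] [CompleteSpace E]
  [NormedAddCommGroup F] [InnerProductSpace ℝ F] [CompleteSpace F] {k l : WithTop ℕ∞}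

theorem ContDiff.gradient {f : E → ℝ} (hf : ContDiff ℝ k f) (hlk : l + 1 ≤ k) :
    ContDiff ℝ l (gradient f) :=
  (InnerProductSpace.toDual ℝ E).symm.contDiff.comp (hf.fderiv_right hlk)

theorem ContDiff.adjoint_fderiv {g : E → F} (hg : ContDiff ℝ k g) (hlk : l + 1 ≤ k) :
    ContDiff ℝ l fun x => ContinuousLinearMap.adjoint (fderiv ℝ g x) :=
  (ContinuousLinearMap.adjoint (𝕜 := ℝ) (E := E) (F := F)).toContinuousLinearEquiv.contDiff.comp
    (hg.fderiv_right hlk)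

end Regularity

section Curves

variable {E F G : Type*} [NormedAddCommGroup E] [NormedSpace ℝ E]
  [NormedAddCommGroup F] [NormedSpace ℝ F] [NormedAddCommGroup G] [NormedSpace ℝ G]
  {A : E → G} {B : E → F →L[ℝ] G} {q₀ : ℝ → ℝ} {q₁ : ℝ → E} {q₂ : ℝ → F}
  {u₀ : ℝ} {u₁ : E} {u₂ : F} {t : ℝ}

theorem hasDerivAt_smul_add_clm_apply (hA : DifferentiableAt ℝ A (q₁ t))
    (hB : DifferentiableAt ℝ B (q₁ t)) (hq₀ : HasDerivAt q₀ u₀ t)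
    (hq₁ : HasDerivAt q₁ u₁ t) (hq₂ : HasDerivAt q₂ u₂ t) :
    HasDerivAt (fun s => q₀ s • A (q₁ s) + B (q₁ s) (q₂ s))
      (fderiv ℝ (fun x => q₀ t • A x + B x (q₂ t)) (q₁ t) u₁
        + u₀ • A (q₁ t) + B (q₁ t) u₂) t := by
  have hpartial : HasFDerivAt (fun x => q₀ t • A x + B x (q₂ t))
      (q₀ t • fderiv ℝ A (q₁ t) + (fderiv ℝ B (q₁ t)).flip (q₂ t)) (q₁ t) := by
    refine ((hA.hasFDerivAt.const_smul (q₀ t)).add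
      (hB.hasFDerivAt.clm_apply (hasFDerivAt_const (q₂ t) (q₁ t)))).congr_fderiv ?_
    simp
  have hcurve := (hq₀.smul (hA.hasFDerivAt.comp_hasDerivAt t hq₁)).add
    ((hB.hasFDerivAt.comp_hasDerivAt t hq₁).clm_apply hq₂)
  refine hcurve.congr_deriv ?_
  rw [hpartial.fderiv]
  simp only [add_apply, smul_apply, ContinuousLinearMap.flip_apply, Function.comp_apply]
  abel

end Curves

/-- **Natural dynamics of optimization (Theorem 4.1).**
For twice continuously differentiable data functions `g₀ : ℝⁿ → ℝ`, `g : ℝⁿ → ℝᵐ` and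
the generalized Lagrangian `L(q₀,q₁,q₂) = q₀ g₀(q₁) + ⟨q₂, g(q₁)⟩`, if
`q₀, q₁, q₂` are differentiable curves with derivatives `u₀, u₁, u₂`, then the lifted
variables `q₃ = -∇_{q₁}L`, `q₄ = g ∘ q₁`, `q₅ = g₀ ∘ q₁` are differentiable and obey
the dynamical system (D). Here `∇_{q₁}L(a,x,y) = a • ∇g₀(x) + (Dg(x))ᵀ y` is encoded by
`gradL`, the Hessian `∂²_{q₁}L` as the Fréchet derivative of `x ↦ gradL a x y`, and
`(Dg)ᵀ` as the adjoint of the Fréchet derivative of `g`. -/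
theorem natural_dynamics_of_optimization {n m : ℕ}
    (g₀ : EuclideanSpace ℝ (Fin n) → ℝ)
    (g : EuclideanSpace ℝ (Fin n) → EuclideanSpace ℝ (Fin m))
    (hg₀ : ContDiff ℝ 2 g₀) (hg : ContDiff ℝ 2 g)
    (gradL : ℝ → EuclideanSpace ℝ (Fin n) → EuclideanSpace ℝ (Fin m) →
      EuclideanSpace ℝ (Fin n))
    (hgradL : ∀ a x y, gradL a x y =
      a • gradient g₀ x + ContinuousLinearMap.adjoint (fderiv ℝ g x) y)
    (q₀ : ℝ → ℝ) (q₁ : ℝ → EuclideanSpace ℝ (Fin n)) (q₂ : ℝ → EuclideanSpace ℝ (Fin m))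
    (u₀ : ℝ → ℝ) (u₁ : ℝ → EuclideanSpace ℝ (Fin n)) (u₂ : ℝ → EuclideanSpace ℝ (Fin m))
    (hq₀ : ∀ t, HasDerivAt q₀ (u₀ t) t)
    (hq₁ : ∀ t, HasDerivAt q₁ (u₁ t) t)
    (hq₂ : ∀ t, HasDerivAt q₂ (u₂ t) t)
    (q₃ : ℝ → EuclideanSpace ℝ (Fin n))
    (hq₃ : ∀ t, q₃ t = -gradL (q₀ t) (q₁ t) (q₂ t))
    (q₄ : ℝ → EuclideanSpace ℝ (Fin m))
    (hq₄ : ∀ t, q₄ t = g (q₁ t))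
    (q₅ : ℝ → ℝ)
    (hq₅ : ∀ t, q₅ t = g₀ (q₁ t)) :
    ∀ t : ℝ,
      HasDerivAt q₃
        (-(fderiv ℝ (fun x => gradL (q₀ t) x (q₂ t)) (q₁ t) (u₁ t))
          - u₀ t • gradient g₀ (q₁ t)
          - ContinuousLinearMap.adjoint (fderiv ℝ g (q₁ t)) (u₂ t)) t ∧
      HasDerivAt q₄ (fderiv ℝ g (q₁ t) (u₁ t)) t ∧
      HasDerivAt q₅ ⟪gradient g₀ (q₁ t), u₁ t⟫ t := by
  intro t
  obtain rfl : gradL = fun a x y =>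
      a • gradient g₀ x + ContinuousLinearMap.adjoint (fderiv ℝ g x) y := by
    funext a x y
    exact hgradL a x y
  obtain rfl : q₃ = _ := funext hq₃
  obtain rfl : q₄ = _ := funext hq₄
  obtain rfl : q₅ = _ := funext hq₅
  refine ⟨?_, ?_, ?_⟩
  · have hgrad := (hg₀.gradient (l := 1) le_rfl).differentiable one_ne_zero (q₁ t)
    have hadj := (hg.adjoint_fderiv (l := 1) le_rfl).differentiable one_ne_zero (q₁ t)
    refine (hasDerivAt_smul_add_clm_apply hgrad hadj (hq₀ t) (hq₁ t) (hq₂ t)).neg.congr_deriv ?_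
    abel
  · exact ((hg.differentiable two_ne_zero) (q₁ t)).hasFDerivAt.comp_hasDerivAt t (hq₁ t)
  · rw [inner_gradient_left]
    exact ((hg₀.differentiable two_ne_zero) (q₁ t)).hasFDerivAt.comp_hasDerivAt t (hq₁ t)
end

section
/- Let F : ℝᴺ × ℝᴹ → ℝᴺ, let U : ℝᴺ × ℝ → Set(ℝᴹ), let 𝓛 : ℝᴺ × ℝᴹ × ℝ → ℝ, let ℓ : ℝᴺ × ℝ → ℝ, let T ⊆ ℝᴺ, let t₀ ∈ ℝ and q⁰⁰ ∈ ℝᴺ. Call a triple (q, u, t_f) feasible if t_f ≥ t₀, q : ℝ → ℝᴺ is continuously differentiable on [t₀, t_f], u : ℝ → ℝᴹ satisfies u(t) ∈ U(q(t), t) and q'(t) = F(q(t), u(t)) for all t ∈ [t₀, t_f], the map t ↦ 𝓛(q(t), u(t), t) is integrable on [t₀, t_f], q(t₀) = q⁰⁰ and q(t_f) ∈ T; and define its cost J := ℓ(q(t_f), t_f) + ∫_{t₀}^{t_f} 𝓛(q(t), u(t), t) dt. Suppose there exists a continuously differentiable function φ : ℝᴺ × ℝ → ℝ such that: (i) for all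 q ∈ ℝᴺ, all t ∈ ℝ and all u ∈ U(q, t), 𝓛(q, u, t) + ⟨∂_q φ(q, t), F(q, u)⟩ + ∂_t φ(q, t) ≥ 0; (ii) φ(q, t) = ℓ(q, t) for all q ∈ T and all t ∈ ℝ; and (iii) there exists a feasible triple (q♭, u♭, t_f♭) whose cost J♭ equals φ(q⁰⁰, t₀). Then every feasible triple (q, u, t_f) has cost J ≥ J♭; that is, (q♭, u♭, t_f♭) is optimal and the optimal value is φ(q⁰⁰, t₀). -/
/-! Along a feasible trajectory the Hamilton-Jacobi inequality says
`d/dt φ(q(t), t) ≥ -𝓛(q(t), u(t), t)`; integrating over `[t₀, t_f]` and using `φ = ℓ` on the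
target gives `J ≥ φ(q⁰⁰, t₀)` for every feasible triple, a bound that the given triple attains.
The integration uses the one-sided comparison form of the fundamental theorem of calculus, so only
the running cost has to be integrable, not the derivative of `t ↦ φ(q(t), t)`. -/

open scoped RealInnerProductSpace

/-- A triple `(q, u, t_f)` is feasible for the optimal control problem (M) with data
`(t₀, q⁰⁰, T, F, U, 𝓛)` if `t_f ≥ t₀`, `q` is continuously differentiable on `[t₀, t_f]`,
the control constraint and the dynamics hold on `[t₀, t_f]`, the running cost is
integrable on `[t₀, t_f]`, and the boundary conditions `q(t₀) = q⁰⁰`, `q(t_f) ∈ T` hold. -/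
def FeasibleTriple {N M : ℕ} (t₀ : ℝ) (q00 : EuclideanSpace ℝ (Fin N))
    (T : Set (EuclideanSpace ℝ (Fin N)))
    (F : EuclideanSpace ℝ (Fin N) → EuclideanSpace ℝ (Fin M) → EuclideanSpace ℝ (Fin N))
    (U : EuclideanSpace ℝ (Fin N) → ℝ → Set (EuclideanSpace ℝ (Fin M)))
    (𝓛 : EuclideanSpace ℝ (Fin N) → EuclideanSpace ℝ (Fin M) → ℝ → ℝ)
    (q : ℝ → EuclideanSpace ℝ (Fin N)) (u : ℝ → EuclideanSpace ℝ (Fin M))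
    (tf : ℝ) : Prop :=
  t₀ ≤ tf ∧
  ContDiffOn ℝ 1 q (Set.Icc t₀ tf) ∧
  (∀ t ∈ Set.Icc t₀ tf, u t ∈ U (q t) t) ∧
  (∀ t ∈ Set.Icc t₀ tf, HasDerivAt q (F (q t) (u t)) t) ∧
  MeasureTheory.IntegrableOn (fun t => 𝓛 (q t) (u t) t) (Set.Icc t₀ tf) ∧
  q t₀ = q00 ∧ q tf ∈ T

/-- The cost of a triple `(q, u, t_f)`:
`J = ℓ(q(t_f), t_f) + ∫_{t₀}^{t_f} 𝓛(q(t), u(t), t) dt`. -/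
noncomputable def costJ {N M : ℕ} (t₀ : ℝ)
    (ℓ : EuclideanSpace ℝ (Fin N) → ℝ → ℝ)
    (𝓛 : EuclideanSpace ℝ (Fin N) → EuclideanSpace ℝ (Fin M) → ℝ → ℝ)
    (q : ℝ → EuclideanSpace ℝ (Fin N)) (u : ℝ → EuclideanSpace ℝ (Fin M))
    (tf : ℝ) : ℝ :=
  ℓ (q tf) tf + ∫ t in t₀..tf, 𝓛 (q t) (u t) t

open Set MeasureTheory

section HamiltonJacobi

variable {E : Type*} [NormedAddCommGroup E] [InnerProductSpace ℝ E] [CompleteSpace E]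

theorem hasDerivAt_comp_gradient_add_deriv {φ : E → ℝ → ℝ} {q : ℝ → E} {v : E} {t : ℝ}
    (hφ : DifferentiableAt ℝ (fun p : E × ℝ => φ p.1 p.2) (q t, t)) (hq : HasDerivAt q v t) :
    HasDerivAt (fun s => φ (q s) s) (⟪gradient (fun x => φ x t) (q t), v⟫ + deriv (φ (q t)) t)
      t := by
  set D := fderiv ℝ (fun p : E × ℝ => φ p.1 p.2) (q t, t)
  have hspace : HasGradientAt (fun x => φ x t) (InnerProductSpace.toDual ℝ E |>.symm
      (D.comp (ContinuousLinearMap.inl ℝ E ℝ))) (q t) :=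
    hasFDerivAt_iff_hasGradientAt.mp
      (hφ.hasFDerivAt.comp (f := fun x => (x, t)) (q t) (hasFDerivAt_prodMk_left (q t) t))
  have htime : HasDerivAt (φ (q t)) (D (0, 1)) t :=
    hφ.hasFDerivAt.comp_hasDerivAt t ((hasDerivAt_const t (q t)).prodMk (hasDerivAt_id t))
  have hsplit : D (v, 1) = D (v, 0) + D (0, 1) := by
    rw [← map_add, Prod.mk_add_mk, add_zero, zero_add]
  rw [hspace.gradient, htime.deriv, InnerProductSpace.toDual_symm_apply,
    ContinuousLinearMap.comp_apply, ContinuousLinearMap.inl_apply, ← hsplit]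
  exact hφ.hasFDerivAt.comp_hasDerivAt (f := fun s => (q s, s)) t (hq.prodMk (hasDerivAt_id t))

theorem le_add_intervalIntegral_of_hamiltonJacobi {φ : E → ℝ → ℝ}
    (hφ : Differentiable ℝ (fun p : E × ℝ => φ p.1 p.2)) {q q' : ℝ → E} {L : ℝ → ℝ} {a b : ℝ}
    (hab : a ≤ b) (hq : ∀ t ∈ Icc a b, HasDerivAt q (q' t) t) (hL : IntegrableOn L (Icc a b))
    (hHJI : ∀ t ∈ Ioo a b, 0 ≤ L t + ⟪gradient (fun x => φ x t) (q t), q' t⟫ + deriv (φ (q t)) t) :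
    φ (q a) a ≤ φ (q b) b + ∫ t in a..b, L t := by
  have hderiv (t) (ht : t ∈ Icc a b) : HasDerivAt (fun s => -φ (q s) s)
      (-(⟪gradient (fun x => φ x t) (q t), q' t⟫ + deriv (φ (q t)) t)) t :=
    (hasDerivAt_comp_gradient_add_deriv (hφ _) (hq t ht)).neg
  have hdecrease := intervalIntegral.sub_le_integral_of_hasDeriv_right_of_le hab
    (fun t ht => (hderiv t ht).continuousAt.continuousWithinAt)
    (fun t ht => (hderiv t (Ioo_subset_Icc_self ht)).hasDerivWithinAt) hL
    (fun t ht => by linarith [hHJI t ht])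
  linarith

end HamiltonJacobi

theorem FeasibleTriple.le_costJ {N M : ℕ} {t₀ : ℝ} {q00 : EuclideanSpace ℝ (Fin N)}
    {T : Set (EuclideanSpace ℝ (Fin N))}
    {F : EuclideanSpace ℝ (Fin N) → EuclideanSpace ℝ (Fin M) → EuclideanSpace ℝ (Fin N)}
    {U : EuclideanSpace ℝ (Fin N) → ℝ → Set (EuclideanSpace ℝ (Fin M))}
    {𝓛 : EuclideanSpace ℝ (Fin N) → EuclideanSpace ℝ (Fin M) → ℝ → ℝ}
    {ℓ φ : EuclideanSpace ℝ (Fin N) → ℝ → ℝ}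
    (hφ : Differentiable ℝ (fun p : EuclideanSpace ℝ (Fin N) × ℝ => φ p.1 p.2))
    (hHJI : ∀ (q : EuclideanSpace ℝ (Fin N)) (t : ℝ), ∀ u ∈ U q t,
      0 ≤ 𝓛 q u t + ⟪gradient (fun x => φ x t) q, F q u⟫ + deriv (φ q) t)
    (hbc : ∀ q ∈ T, ∀ t : ℝ, φ q t = ℓ q t)
    {q : ℝ → EuclideanSpace ℝ (Fin N)} {u : ℝ → EuclideanSpace ℝ (Fin M)} {tf : ℝ}
    (hfeas : FeasibleTriple t₀ q00 T F U 𝓛 q u tf) :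
    φ q00 t₀ ≤ costJ t₀ ℓ 𝓛 q u tf := by
  obtain ⟨htf, -, hU, hODE, hInt, rfl, hqT⟩ := hfeas
  rw [costJ, ← hbc _ hqT]
  exact le_add_intervalIntegral_of_hamiltonJacobi hφ htf hODE hInt
    fun t ht => hHJI _ _ _ (hU t (Ioo_subset_Icc_self ht))

theorem optimal_optimization_verification_general {N M : ℕ}
    (t₀ : ℝ) (q00 : EuclideanSpace ℝ (Fin N))
    (T : Set (EuclideanSpace ℝ (Fin N)))
    (F : EuclideanSpace ℝ (Fin N) → EuclideanSpace ℝ (Fin M) → EuclideanSpace ℝ (Fin N))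
    (U : EuclideanSpace ℝ (Fin N) → ℝ → Set (EuclideanSpace ℝ (Fin M)))
    (𝓛 : EuclideanSpace ℝ (Fin N) → EuclideanSpace ℝ (Fin M) → ℝ → ℝ)
    (ℓ : EuclideanSpace ℝ (Fin N) → ℝ → ℝ)
    (φ : EuclideanSpace ℝ (Fin N) → ℝ → ℝ)
    (hφ : ContDiff ℝ 1 (fun p : EuclideanSpace ℝ (Fin N) × ℝ => φ p.1 p.2))
    (hHJI : ∀ (q : EuclideanSpace ℝ (Fin N)) (t : ℝ), ∀ u ∈ U q t,
      0 ≤ 𝓛 q u t + ⟪gradient (fun x => φ x t) q, F q u⟫ + deriv (φ q) t)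
    (hbc : ∀ q ∈ T, ∀ t : ℝ, φ q t = ℓ q t)
    (qflat : ℝ → EuclideanSpace ℝ (Fin N)) (uflat : ℝ → EuclideanSpace ℝ (Fin M))
    (tfflat : ℝ)
    (hval : costJ t₀ ℓ 𝓛 qflat uflat tfflat = φ q00 t₀) :
    ∀ (q : ℝ → EuclideanSpace ℝ (Fin N)) (u : ℝ → EuclideanSpace ℝ (Fin M)) (tf : ℝ),
      FeasibleTriple t₀ q00 T F U 𝓛 q u tf →
      costJ t₀ ℓ 𝓛 qflat uflat tfflat ≤ costJ t₀ ℓ 𝓛 q u tf := by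
  intro q u tf hQ
  rw [hval]
  exact hQ.le_costJ (hφ.differentiable one_ne_zero) hHJI hbc

/-- **Verification theorem for optimal optimization (Theorem 4.9).**
If there is a continuously differentiable `φ` satisfying (i) the pointwise Hamilton-Jacobi
inequality `𝓛(q,u,t) + ⟨∂_q φ(q,t), F(q,u)⟩ + ∂_t φ(q,t) ≥ 0` for all `q`, `t` and
`u ∈ U(q,t)`, (ii) the boundary condition `φ = ℓ` on `T`, and (iii) there is a feasible
triple `(q♭, u♭, t_f♭)` whose cost equals `φ(q⁰⁰, t₀)`, then every feasible triple has cost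
at least that of `(q♭, u♭, t_f♭)`; i.e. `(q♭, u♭, t_f♭)` is optimal with optimal value
`φ(q⁰⁰, t₀)`. -/
theorem optimal_optimization_verification {N M : ℕ}
    (t₀ : ℝ) (q00 : EuclideanSpace ℝ (Fin N))
    (T : Set (EuclideanSpace ℝ (Fin N)))
    (F : EuclideanSpace ℝ (Fin N) → EuclideanSpace ℝ (Fin M) → EuclideanSpace ℝ (Fin N))
    (U : EuclideanSpace ℝ (Fin N) → ℝ → Set (EuclideanSpace ℝ (Fin M)))
    (𝓛 : EuclideanSpace ℝ (Fin N) → EuclideanSpace ℝ (Fin M) → ℝ → ℝ)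
    (ℓ : EuclideanSpace ℝ (Fin N) → ℝ → ℝ)
    (φ : EuclideanSpace ℝ (Fin N) → ℝ → ℝ)
    (hφ : ContDiff ℝ 1 (fun p : EuclideanSpace ℝ (Fin N) × ℝ => φ p.1 p.2))
    (hHJI : ∀ (q : EuclideanSpace ℝ (Fin N)) (t : ℝ), ∀ u ∈ U q t,
      0 ≤ 𝓛 q u t + ⟪gradient (fun x => φ x t) q, F q u⟫ + deriv (φ q) t)
    (hbc : ∀ q ∈ T, ∀ t : ℝ, φ q t = ℓ q t)
    (qflat : ℝ → EuclideanSpace ℝ (Fin N)) (uflat : ℝ → EuclideanSpace ℝ (Fin M))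
    (tfflat : ℝ)
    (hfeas : FeasibleTriple t₀ q00 T F U 𝓛 qflat uflat tfflat)
    (hval : costJ t₀ ℓ 𝓛 qflat uflat tfflat = φ q00 t₀) :
    ∀ (q : ℝ → EuclideanSpace ℝ (Fin N)) (u : ℝ → EuclideanSpace ℝ (Fin M)) (tf : ℝ),
      FeasibleTriple t₀ q00 T F U 𝓛 q u tf →
      costJ t₀ ℓ 𝓛 qflat uflat tfflat ≤ costJ t₀ ℓ 𝓛 q u tf :=
  optimal_optimization_verification_general t₀ q00 T F U 𝓛 ℓ φ hφ hHJI hbc qflat uflat tfflat hval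
end

section
/- Let B be an m×n real matrix and define M := [[0, −Bᵀ],[B, 0]] (an (n+m)×(n+m) block matrix). Then M is skew-symmetric and for every x₀ ∈ ℝ^{n+m} and every t ∈ ℝ, ‖exp(−t·Mᵀ)·x₀‖ = ‖x₀‖ in the Euclidean norm. Consequently, if x₀ ≠ 0, the solution t ↦ exp(−t·Mᵀ)·x₀ of the residual dynamics x' = −Mᵀ x does not converge to 0 as t → ∞; that is, the Arrow–Hurwicz–Uzawa algorithm is not convergent for linear programming problems. -/
/-!
Since `M` is skew-symmetric, `exp (-t • Mᵀ)` is an orthogonal matrix and therefore preserves the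
Euclidean norm. A trajectory of constant nonzero norm cannot tend to `0`.
-/

open Matrix Filter WithLp

namespace Matrix

theorem transpose_fromBlocks_zero_neg_transpose {m n α : Type*} [AddGroup α]
    (B : Matrix m n α) : (fromBlocks 0 (-Bᵀ) B 0)ᵀ = -fromBlocks 0 (-Bᵀ) B 0 := by
  simp [fromBlocks_transpose, fromBlocks_neg]

variable {n 𝕜 : Type*} [Fintype n] [DecidableEq n] [RCLike 𝕜]

theorem exp_mem_unitaryGroup {A : Matrix n n 𝕜} (hA : Aᴴ = -A) :
    NormedSpace.exp A ∈ unitaryGroup n 𝕜 := by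
  rw [mem_unitaryGroup_iff', star_eq_conjTranspose, ← exp_conjTranspose, hA, exp_neg,
    nonsing_inv_mul _ ((isUnit_iff_isUnit_det _).mp (isUnit_exp A))]

theorem norm_toLp_mulVec_of_mem_unitaryGroup {U : Matrix n n 𝕜} (hU : U ∈ unitaryGroup n 𝕜)
    (x : n → 𝕜) : ‖toLp 2 (U *ᵥ x)‖ = ‖toLp 2 x‖ := by
  rw [← toEuclideanCLM_toLp]
  exact ContinuousLinearMap.norm_map_of_mem_unitary (Unitary.map_mem toEuclideanCLM hU) _

end Matrix

/-- **The Arrow–Hurwicz–Uzawa algorithm is not convergent for linear programming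
problems (Theorem 6.4).**
For a linear program, the Hessian of the Lagrangian vanishes, so the asymmetric KKT
matrix reduces to `M = [[0, -Bᵀ],[B, 0]]`. Then `M` is skew-symmetric, the solution
`t ↦ exp(-t Mᵀ) x₀` of the residual dynamics `x' = -Mᵀ x` has constant Euclidean norm
`‖x₀‖`, and consequently, for `x₀ ≠ 0`, it does not converge to `0` as `t → ∞`. -/
theorem ahu_not_convergent_for_LP {n m : ℕ}
    (B : Matrix (Fin m) (Fin n) ℝ)
    (M : Matrix (Fin n ⊕ Fin m) (Fin n ⊕ Fin m) ℝ)
    (hM : M = Matrix.fromBlocks 0 (-Bᵀ) B 0) :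
    Mᵀ = -M ∧
    (∀ (x₀ : Fin n ⊕ Fin m → ℝ) (t : ℝ),
      ‖(WithLp.equiv 2 ((Fin n ⊕ Fin m) → ℝ)).symm (NormedSpace.exp ((-t) • Mᵀ) *ᵥ x₀)‖
        = ‖(WithLp.equiv 2 ((Fin n ⊕ Fin m) → ℝ)).symm x₀‖) ∧
    (∀ x₀ : Fin n ⊕ Fin m → ℝ, x₀ ≠ 0 →
      ¬ Tendsto (fun t : ℝ => NormedSpace.exp ((-t) • Mᵀ) *ᵥ x₀) atTop (nhds 0)) := by
  have hskew : Mᵀ = -M := hM ▸ transpose_fromBlocks_zero_neg_transpose B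
  have hnorm (x₀ : Fin n ⊕ Fin m → ℝ) (t : ℝ) :
      ‖toLp 2 (NormedSpace.exp ((-t) • Mᵀ) *ᵥ x₀)‖ = ‖toLp 2 x₀‖ := by
    refine norm_toLp_mulVec_of_mem_unitaryGroup (exp_mem_unitaryGroup ?_) x₀
    rw [conjTranspose_eq_transpose_of_trivial, transpose_smul, transpose_transpose, hskew,
      smul_neg, neg_neg]
  refine ⟨hskew, hnorm, fun x₀ hx₀ hlim => hx₀ ?_⟩
  have hlim' := (((PiLp.continuous_toLp 2 _).tendsto 0).comp hlim).norm
  simp only [Function.comp_def, hnorm, toLp_zero, norm_zero] at hlim'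
  simpa using tendsto_nhds_unique tendsto_const_nhds hlim'
end

section
/- Let H be an n×n real symmetric positive definite matrix and B an m×n real matrix of full rank m. Define S_H := B H⁻¹ Bᵀ and let λ_min denote the smallest eigenvalue of H. If λ_min ≥ 4‖S_H‖₂, where ‖·‖₂ denotes the spectral (operator 2-) norm, then every eigenvalue over ℂ of the asymmetric saddle-point matrix K_A := [[H, −Bᵀ],[B, 0]] is real and strictly positive. -/
/-!
Let `(x, y)` be a complex eigenvector of `K_A` for the eigenvalue `μ`. The real matrix `K_A` is
nonsingular, so `μ ≠ 0` and hence `x ≠ 0`. Pairing the first block row `Hx - Bᵀy = μx` with `x`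
and substituting `Bx = μy` gives the scalar equation `μ a - e = μ² d` for the real numbers
`a = x*Hx`, `d = x*x` and `e = ‖Bx‖²`. Cauchy–Schwarz in the inner product defined by `H` gives
`e ≤ ‖S_H‖ a`, and the eigenvalue hypothesis gives `a ≥ 4 ‖S_H‖ d`. If `μ = s + it` with `t ≠ 0`,
the imaginary part of the scalar equation forces `a = 2sd`, so `s ≥ 2‖S_H‖`, and its real part
`e = (s² + t²) d` then contradicts `e ≤ ‖S_H‖ a ≤ s² d`. For real `μ` the equation reads
`μ a = μ² d + e ≥ 0`, which forces `μ > 0`.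
-/

open Matrix ComplexOrder

namespace Matrix

variable {ι κ : Type*}

lemma fromBlocks_neg_transpose_map_ofReal (H : Matrix ι ι ℝ) (B : Matrix κ ι ℝ) :
    (fromBlocks H (-Bᵀ) B 0).map (Complex.ofReal ·) =
      fromBlocks (H.map Complex.ofReal) (-(B.map Complex.ofReal)ᴴ) (B.map Complex.ofReal) 0 := by
  ext (i | i) (j | j) <;> simp

lemma mulVec_injective_of_rank_eq_card [Fintype κ] {K : Type*} [Field K] {A : Matrix ι κ K}
    (h : A.rank = Fintype.card κ) : Function.Injective A.mulVec := by
  classical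
  have hdim := LinearMap.finrank_range_add_finrank_ker A.mulVecLin
  rw [Module.finrank_fintype_fun_eq_card, ← rank, h, add_eq_left,
    Submodule.finrank_eq_zero, LinearMap.ker_eq_bot] at hdim
  exact hdim

variable [Fintype ι]

lemma exists_mulVec_eq_smul_of_mem_spectrum {K : Type*} [Field K] [DecidableEq ι]
    {A : Matrix ι ι K} {μ : K} (h : μ ∈ spectrum K A) : ∃ v ≠ 0, A *ᵥ v = μ • v := by
  rw [← spectrum_toLin', ← Module.End.hasEigenvalue_iff_mem_spectrum] at h
  obtain ⟨v, hv⟩ := h.exists_hasEigenvector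
  exact ⟨v, hv.2, hv.apply_eq_smul⟩

lemma dotProduct_self_nonneg {R : Type*} [Ring R] [LinearOrder R] [IsStrictOrderedRing R]
    (v : ι → R) : 0 ≤ v ⬝ᵥ v :=
  Finset.sum_nonneg fun i _ => mul_self_nonneg (v i)

lemma PosSemidef.dotProduct_mulVec_sq_le {M : Matrix ι ι ℝ} (hM : M.PosSemidef) (u v : ι → ℝ) :
    (u ⬝ᵥ M *ᵥ v) ^ 2 ≤ (u ⬝ᵥ M *ᵥ u) * (v ⬝ᵥ M *ᵥ v) := by
  let := M.toSeminormedAddCommGroup hM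
  let := M.toInnerProductSpace hM
  have hinner (x y : ι → ℝ) : (inner ℝ x y : ℝ) = x ⬝ᵥ M *ᵥ y := by
    change (M *ᵥ y) ⬝ᵥ star x = _
    rw [star_trivial, dotProduct_comm]
  simpa only [hinner, sq] using real_inner_mul_inner_self_le u v

lemma dotProduct_mulVec_le_norm_toEuclideanCLM_mul [DecidableEq ι] (S : Matrix ι ι ℝ)
    (u : ι → ℝ) : u ⬝ᵥ S *ᵥ u ≤ ‖toEuclideanCLM (𝕜 := ℝ) S‖ * (u ⬝ᵥ u) := by
  set x := WithLp.toLp 2 u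
  have hx : ‖x‖ ^ 2 = u ⬝ᵥ u := by
    rw [← real_inner_self_eq_norm_sq, EuclideanSpace.inner_toLp_toLp, star_trivial,
      dotProduct_comm]
  calc u ⬝ᵥ S *ᵥ u = inner ℝ x (toEuclideanCLM (𝕜 := ℝ) S x) := (inner_toEuclideanCLM S x x).symm
    _ ≤ ‖x‖ * ‖toEuclideanCLM (𝕜 := ℝ) S x‖ := real_inner_le_norm _ _
    _ ≤ ‖x‖ * (‖toEuclideanCLM (𝕜 := ℝ) S‖ * ‖x‖) := by
        gcongr; exact ContinuousLinearMap.le_opNorm _ _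
    _ = ‖toEuclideanCLM (𝕜 := ℝ) S‖ * (u ⬝ᵥ u) := by rw [← hx]; ring

open scoped MatrixOrder in
lemma IsHermitian.mul_dotProduct_self_le [DecidableEq ι] {M : Matrix ι ι ℝ} (hM : M.IsHermitian)
    {t : ℝ} (ht : ∀ i, t ≤ hM.eigenvalues i) (u : ι → ℝ) : t * (u ⬝ᵥ u) ≤ u ⬝ᵥ M *ᵥ u := by
  have hle : algebraMap ℝ _ t ≤ M := by
    rw [algebraMap_le_iff_le_spectrum (ha := hM.isSelfAdjoint),
      hM.spectrum_real_eq_range_eigenvalues]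
    rintro _ ⟨i, rfl⟩
    exact ht i
  have := (Matrix.le_iff.mp hle).dotProduct_mulVec_nonneg u
  rwa [Algebra.algebraMap_eq_smul_one, sub_mulVec, smul_mulVec, one_mulVec, dotProduct_sub,
    dotProduct_smul, smul_eq_mul, sub_nonneg] at this

lemma re_star_dotProduct (x z : ι → ℂ) :
    (star x ⬝ᵥ z).re =
      (Complex.re ∘ x) ⬝ᵥ (Complex.re ∘ z) + (Complex.im ∘ x) ⬝ᵥ (Complex.im ∘ z) := by
  simp [dotProduct, Complex.re_sum, Finset.sum_add_distrib]

lemma im_star_dotProduct (x z : ι → ℂ) :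
    (star x ⬝ᵥ z).im =
      (Complex.re ∘ x) ⬝ᵥ (Complex.im ∘ z) - (Complex.im ∘ x) ⬝ᵥ (Complex.re ∘ z) := by
  simp only [dotProduct, Complex.im_sum, ← Finset.sum_sub_distrib]
  congr 1 with i
  simp [sub_eq_add_neg]

lemma star_dotProduct_self_eq_ofReal (z : ι → ℂ) :
    star z ⬝ᵥ z =
      ↑((Complex.re ∘ z) ⬝ᵥ (Complex.re ∘ z) + (Complex.im ∘ z) ⬝ᵥ (Complex.im ∘ z)) := by
  apply Complex.ext
  · rw [re_star_dotProduct, Complex.ofReal_re]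
  · rw [im_star_dotProduct, Complex.ofReal_im, dotProduct_comm, sub_self]

lemma re_comp_map_ofReal_mulVec (M : Matrix κ ι ℝ) (x : ι → ℂ) :
    Complex.re ∘ (M.map Complex.ofReal *ᵥ x) = M *ᵥ (Complex.re ∘ x) := by
  ext i
  simp [mulVec, dotProduct, Complex.re_sum]

lemma im_comp_map_ofReal_mulVec (M : Matrix κ ι ℝ) (x : ι → ℂ) :
    Complex.im ∘ (M.map Complex.ofReal *ᵥ x) = M *ᵥ (Complex.im ∘ x) := by
  ext i
  simp [mulVec, dotProduct, Complex.im_sum]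

lemma IsSymm.star_dotProduct_map_ofReal_mulVec {M : Matrix ι ι ℝ} (hM : M.IsSymm)
    (x : ι → ℂ) :
    star x ⬝ᵥ M.map Complex.ofReal *ᵥ x =
      ↑((Complex.re ∘ x) ⬝ᵥ M *ᵥ (Complex.re ∘ x) + (Complex.im ∘ x) ⬝ᵥ M *ᵥ (Complex.im ∘ x)) := by
  apply Complex.ext
  · rw [re_star_dotProduct, re_comp_map_ofReal_mulVec, im_comp_map_ofReal_mulVec,
      Complex.ofReal_re]
  · rw [im_star_dotProduct, re_comp_map_ofReal_mulVec, im_comp_map_ofReal_mulVec,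
      Complex.ofReal_im, dotProduct_mulVec, ← mulVec_transpose, hM.eq, dotProduct_comm, sub_self]

variable [Fintype κ]

-- Cauchy–Schwarz for the form of `H`, applied to `H⁻¹Bᵀ(Bu)` and `u`, after cancelling `‖Bu‖²`.
lemma PosDef.mulVec_dotProduct_mulVec_le [DecidableEq ι] [DecidableEq κ] {H : Matrix ι ι ℝ}
    (hH : H.PosDef) (B : Matrix κ ι ℝ) (u : ι → ℝ) :
    (B *ᵥ u) ⬝ᵥ (B *ᵥ u) ≤ ‖toEuclideanCLM (𝕜 := ℝ) (B * H⁻¹ * Bᵀ)‖ * (u ⬝ᵥ H *ᵥ u) := by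
  set c := ‖toEuclideanCLM (𝕜 := ℝ) (B * H⁻¹ * Bᵀ)‖
  set z := B *ᵥ u
  set w := H⁻¹ *ᵥ (Bᵀ *ᵥ z)
  have hHw : H *ᵥ w = Bᵀ *ᵥ z := by
    rw [mulVec_mulVec, mul_nonsing_inv _ (isUnit_iff_isUnit_det H |>.mp hH.isUnit), one_mulVec]
  have hzz : z ⬝ᵥ z = w ⬝ᵥ H *ᵥ u := by
    rw [dotProduct_mulVec w, ← mulVec_transpose, (isHermitian_iff_isSymm.mp hH.isHermitian).eq,
      hHw, dotProduct_comm, dotProduct_mulVec, ← mulVec_transpose]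
  have hww : w ⬝ᵥ H *ᵥ w = z ⬝ᵥ (B * H⁻¹ * Bᵀ) *ᵥ z := by
    rw [hHw, ← mulVec_mulVec, ← mulVec_mulVec, dotProduct_mulVec z B, ← mulVec_transpose,
      dotProduct_comm]
  have ha : 0 ≤ u ⬝ᵥ H *ᵥ u := hH.posSemidef.dotProduct_mulVec_nonneg u
  have hcs : (z ⬝ᵥ z) ^ 2 ≤ c * (z ⬝ᵥ z) * (u ⬝ᵥ H *ᵥ u) :=
    calc (z ⬝ᵥ z) ^ 2 ≤ (w ⬝ᵥ H *ᵥ w) * (u ⬝ᵥ H *ᵥ u) :=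
          hzz ▸ hH.posSemidef.dotProduct_mulVec_sq_le w u
      _ ≤ c * (z ⬝ᵥ z) * (u ⬝ᵥ H *ᵥ u) := by
          rw [hww]
          gcongr
          exact dotProduct_mulVec_le_norm_toEuclideanCLM_mul _ z
  rcases (dotProduct_self_nonneg z).eq_or_lt with hz | hz
  · rw [← hz]
    exact mul_nonneg (norm_nonneg _) ha
  · refine le_of_mul_le_mul_left ?_ hz
    linarith [show c * (z ⬝ᵥ z) * (u ⬝ᵥ H *ᵥ u) = z ⬝ᵥ z * (c * (u ⬝ᵥ H *ᵥ u)) by ring]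

section Blocks

variable {R : Type*} [CommRing R] [StarRing R] {A : Matrix ι ι R} {C : Matrix κ ι R}
  {x : ι → R} {y : κ → R} {μ : R}

lemma fromBlocks_neg_conjTranspose_mulVec_eq_smul_iff :
    fromBlocks A (-Cᴴ) C 0 *ᵥ Sum.elim x y = μ • Sum.elim x y ↔
      A *ᵥ x - Cᴴ *ᵥ y = μ • x ∧ C *ᵥ x = μ • y := by
  have : μ • Sum.elim x y = Sum.elim (μ • x) (μ • y) := by ext (i | i) <;> rfl
  rw [fromBlocks_mulVec, this, Sum.elim_eq_iff]
  simp [sub_eq_add_neg, neg_mulVec]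

lemma star_dotProduct_mulVec_sub_eq_of_mulVec_sub (h : A *ᵥ x - Cᴴ *ᵥ y = μ • x) :
    star x ⬝ᵥ A *ᵥ x - star (C *ᵥ x) ⬝ᵥ y = μ * (star x ⬝ᵥ x) := by
  rw [← smul_eq_mul, ← dotProduct_smul, ← h, dotProduct_sub, dotProduct_mulVec (star x) Cᴴ,
    ← star_mulVec]

lemma exists_ne_zero_mul_sub_eq_sq_mul_of_mem_spectrum_fromBlocks {K : Type*} [Field K]
    [StarRing K] [DecidableEq ι] [DecidableEq κ] {A : Matrix ι ι K} {C : Matrix κ ι K} {μ : K}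
    (hμ : μ ∈ spectrum K (fromBlocks A (-Cᴴ) C 0)) (hμ0 : μ ≠ 0) :
    ∃ x ≠ 0, μ * (star x ⬝ᵥ A *ᵥ x) - star (C *ᵥ x) ⬝ᵥ (C *ᵥ x) = μ ^ 2 * (star x ⬝ᵥ x) := by
  obtain ⟨v, hv0, hv⟩ := exists_mulVec_eq_smul_of_mem_spectrum hμ
  obtain ⟨x, y, rfl⟩ : ∃ x y, v = Sum.elim x y := ⟨_, _, (Sum.elim_comp_inl_inr v).symm⟩
  obtain ⟨h₁, h₂⟩ := fromBlocks_neg_conjTranspose_mulVec_eq_smul_iff.mp hv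
  refine ⟨x, fun hx => hv0 ?_, ?_⟩
  · rw [hx, mulVec_zero, eq_comm, smul_eq_zero] at h₂
    rw [hx, h₂.resolve_left hμ0, Sum.elim_zero_zero]
  · have hCx : star (C *ᵥ x) ⬝ᵥ (C *ᵥ x) = μ * (star (C *ᵥ x) ⬝ᵥ y) := by
      rw [← smul_eq_mul, ← dotProduct_smul, ← h₂]
    linear_combination μ * star_dotProduct_mulVec_sub_eq_of_mulVec_sub h₁ - hCx

end Blocks

lemma PosDef.isUnit_fromBlocks_neg_transpose [DecidableEq ι] [DecidableEq κ] {H : Matrix ι ι ℝ}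
    (hH : H.PosDef) {B : Matrix κ ι ℝ} (hB : Function.Injective Bᵀ.mulVec) :
    IsUnit (fromBlocks H (-Bᵀ) B 0) := by
  rw [← mulVec_injective_iff_isUnit, ← coe_mulVecLin, ← LinearMap.ker_eq_bot,
    ker_mulVecLin_eq_bot_iff]
  intro v hv
  rw [← Sum.elim_comp_inl_inr v, ← conjTranspose_eq_transpose_of_trivial,
    ← zero_smul ℝ (Sum.elim _ _), fromBlocks_neg_conjTranspose_mulVec_eq_smul_iff] at hv
  obtain ⟨h₁, h₂⟩ := hv
  have hx : v ∘ Sum.inl = 0 := by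
    by_contra hx
    have := star_dotProduct_mulVec_sub_eq_of_mulVec_sub h₁
    rw [h₂, zero_smul, star_zero, zero_dotProduct, sub_zero, zero_mul] at this
    exact (hH.dotProduct_mulVec_pos hx).ne' this
  have hy : v ∘ Sum.inr = 0 := hB <| by
    rwa [hx, mulVec_zero, zero_sub, zero_smul, neg_eq_zero, conjTranspose_eq_transpose_of_trivial,
      ← mulVec_zero Bᵀ] at h₁
  rw [← Sum.elim_comp_inl_inr v, hx, hy, Sum.elim_zero_zero]

end Matrix

lemma Complex.im_eq_zero_and_re_pos_of_mul_sub_eq_sq_mul {μ : ℂ} {a c d e : ℝ} (hc : 0 ≤ c)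
    (hd : 0 < d) (he : 0 ≤ e) (hea : e ≤ c * a) (had : 4 * c * d ≤ a) (hμ : μ ≠ 0)
    (h : μ * a - e = μ ^ 2 * d) : μ.im = 0 ∧ 0 < μ.re := by
  obtain ⟨s, t⟩ := μ
  have hre := congrArg Complex.re h
  have him := congrArg Complex.im h
  simp only [sub_re, mul_re, ofReal_re, ofReal_im, mul_zero, sub_zero, sq, mul_im, sub_im,
    zero_add] at hre him
  have ht : t = 0 := by
    by_contra ht
    have ha : a = 2 * s * d := mul_left_cancel₀ ht (by linear_combination him)
    have hs : 2 * c ≤ s := by nlinarith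
    have : 0 < t ^ 2 * d := by positivity
    nlinarith
  subst ht
  refine ⟨rfl, lt_of_not_ge fun hs => hμ ?_⟩
  have hsa : s * a ≤ 0 := mul_nonpos_of_nonpos_of_nonneg hs (by nlinarith)
  have hs0 : s ^ 2 * d = 0 := le_antisymm (by nlinarith) (by positivity)
  exact Complex.ext (by simpa [hd.ne'] using hs0) rfl

/-- **Benzi–Simoncini theorem (Theorem 6.5): a sufficient condition for positive
stability of the asymmetric saddle-point matrix.**
Let `H` be symmetric positive definite, `B` of full rank `m`, `S_H = B H⁻¹ Bᵀ`, and
suppose the smallest eigenvalue of `H` satisfies `λ_min ≥ 4 ‖S_H‖₂` (spectral norm,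
realized as the operator norm of `S_H` acting on Euclidean space; the hypothesis is
stated for every eigenvalue of `H`, equivalently for the smallest one). Then every
eigenvalue over `ℂ` of `K_A = [[H, -Bᵀ],[B, 0]]` is real and strictly positive. -/
theorem benzi_simoncini {n m : ℕ}
    (H : Matrix (Fin n) (Fin n) ℝ) (hH : H.PosDef)
    (B : Matrix (Fin m) (Fin n) ℝ) (hB : B.rank = m)
    (SH : Matrix (Fin m) (Fin m) ℝ) (hSH : SH = B * H⁻¹ * Bᵀ)
    (hmin : ∀ i : Fin n,
      4 * ‖Matrix.toEuclideanCLM (𝕜 := ℝ) SH‖ ≤ hH.1.eigenvalues i) :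
    ∀ μ ∈ spectrum ℂ ((Matrix.fromBlocks H (-Bᵀ) B 0).map (Complex.ofReal ·)),
      μ.im = 0 ∧ 0 < μ.re := by
  intro μ hμ
  have hBT : Function.Injective Bᵀ.mulVec :=
    mulVec_injective_of_rank_eq_card (by rw [rank_transpose, hB, Fintype.card_fin])
  have hμ0 : μ ≠ 0 := by
    rintro rfl
    exact (spectrum.zero_mem_iff ℂ).mp hμ
      ((hH.isUnit_fromBlocks_neg_transpose hBT).map Complex.ofRealHom.mapMatrix)
  rw [fromBlocks_neg_transpose_map_ofReal] at hμ
  obtain ⟨x, hx, hq⟩ := exists_ne_zero_mul_sub_eq_sq_mul_of_mem_spectrum_fromBlocks hμ hμ0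
  rw [(isHermitian_iff_isSymm.mp hH.isHermitian).star_dotProduct_map_ofReal_mulVec,
    star_dotProduct_self_eq_ofReal (B.map _ *ᵥ x), re_comp_map_ofReal_mulVec,
    im_comp_map_ofReal_mulVec, star_dotProduct_self_eq_ofReal x] at hq
  have hd := Complex.zero_lt_real.mp
    (star_dotProduct_self_eq_ofReal x ▸ dotProduct_star_self_pos_iff.mpr hx)
  refine Complex.im_eq_zero_and_re_pos_of_mul_sub_eq_sq_mul
    (norm_nonneg (toEuclideanCLM (𝕜 := ℝ) SH)) hd
    (add_nonneg (dotProduct_self_nonneg _) (dotProduct_self_nonneg _)) ?_ ?_ hμ0 hq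
  · subst hSH
    linarith [hH.mulVec_dotProduct_mulVec_le B (Complex.re ∘ x),
      hH.mulVec_dotProduct_mulVec_le B (Complex.im ∘ x)]
  · linarith [hH.1.mul_dotProduct_self_le hmin (Complex.re ∘ x),
      hH.1.mul_dotProduct_self_le hmin (Complex.im ∘ x)]
end

section
/- Let H be an n×n real symmetric positive definite matrix, let w ∈ ℝⁿ have all components nonzero, let ζ ∈ ℝⁿ be the componentwise sign vector ζᵢ = −sign(wᵢ), and let Δ > 0. Then the unique minimizer of the linear function u ↦ ⟨ζ, −H u⟩ over the ellipsoid {u ∈ ℝⁿ : ⟨u, H u⟩ ≤ Δ} is u* = √(Δ / ⟨ζ, H ζ⟩) · ζ; that is, u* is a strictly positive scalar multiple of the vector whose i-th component is −sign(wᵢ). Consequently the resulting update q₁ ← q₁ + h·u*, h > 0, is the sign gradient descent iteration q₁ ← q₁ − α·sign(∇g₀(q₁)) with α = h·√(Δ/⟨ζ,Hζ⟩) > 0, when w = ∇g₀(q₁). -/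
/-!
For `u` in the ellipsoid `u ⬝ᵥ H *ᵥ u ≤ Δ = σ² ⟨ζ, H ζ⟩`, expanding the `H`-form gives
`⟨u - σζ, H (u - σζ)⟩ ≤ 2σ (⟨ζ, H (σζ)⟩ - ⟨ζ, H u⟩)`. Nonnegativity of the left side makes `σζ`
a minimizer of `u ↦ ⟨ζ, -H u⟩`, and definiteness of `H` makes it the only one.
-/

open Matrix

namespace Matrix

variable {ι R : Type*} [Fintype ι]

theorem IsSymm.dotProduct_mulVec_comm [CommSemiring R] {H : Matrix ι ι R} (hH : H.IsSymm)
    (x y : ι → R) : x ⬝ᵥ H *ᵥ y = y ⬝ᵥ H *ᵥ x := by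
  rw [dotProduct_mulVec, ← mulVec_transpose, hH.eq, dotProduct_comm]

theorem IsSymm.dotProduct_mulVec_sub_smul [CommRing R] {H : Matrix ι ι R} (hH : H.IsSymm)
    (u a : ι → R) (t : R) :
    (u - t • a) ⬝ᵥ H *ᵥ (u - t • a) =
      u ⬝ᵥ H *ᵥ u - 2 * t * (a ⬝ᵥ H *ᵥ u) + t ^ 2 * (a ⬝ᵥ H *ᵥ a) := by
  simp only [mulVec_sub, mulVec_smul, sub_dotProduct, dotProduct_sub, smul_dotProduct,
    dotProduct_smul, smul_eq_mul, hH.dotProduct_mulVec_comm u a]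
  ring

theorem IsSymm.dotProduct_mulVec_sub_smul_le [CommRing R] [PartialOrder R] [IsOrderedRing R]
    {H : Matrix ι ι R} (hH : H.IsSymm) {a u : ι → R} {t Δ : R}
    (ht : t ^ 2 * (a ⬝ᵥ H *ᵥ a) = Δ) (hu : u ⬝ᵥ H *ᵥ u ≤ Δ) :
    (u - t • a) ⬝ᵥ H *ᵥ (u - t • a) ≤ 2 * t * (a ⬝ᵥ H *ᵥ (t • a) - a ⬝ᵥ H *ᵥ u) := by
  rw [hH.dotProduct_mulVec_sub_smul, mulVec_smul, dotProduct_smul, smul_eq_mul]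
  linear_combination hu - ht

variable {H : Matrix ι ι ℝ} {a u : ι → ℝ} {t Δ : ℝ}

theorem PosSemidef.dotProduct_mulVec_le_smul (hH : H.PosSemidef) (ht₀ : 0 < t)
    (ht : t ^ 2 * (a ⬝ᵥ H *ᵥ a) = Δ) (hu : u ⬝ᵥ H *ᵥ u ≤ Δ) :
    a ⬝ᵥ H *ᵥ u ≤ a ⬝ᵥ H *ᵥ (t • a) := by
  have hgap := (isHermitian_iff_isSymm.mp hH.isHermitian).dotProduct_mulVec_sub_smul_le ht hu
  have hnonneg : 0 ≤ (u - t • a) ⬝ᵥ H *ᵥ (u - t • a) := by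
    simpa using hH.dotProduct_mulVec_nonneg (u - t • a)
  exact sub_nonneg.mp (nonneg_of_mul_nonneg_right (hnonneg.trans hgap) (by positivity))

theorem PosDef.eq_smul_of_dotProduct_mulVec_eq (hH : H.PosDef)
    (ht : t ^ 2 * (a ⬝ᵥ H *ᵥ a) = Δ) (hu : u ⬝ᵥ H *ᵥ u ≤ Δ)
    (h : a ⬝ᵥ H *ᵥ u = a ⬝ᵥ H *ᵥ (t • a)) : u = t • a := by
  have hgap := (isHermitian_iff_isSymm.mp hH.isHermitian).dotProduct_mulVec_sub_smul_le ht hu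
  rw [h, sub_self, mul_zero] at hgap
  by_contra hne
  have := hH.dotProduct_mulVec_pos (sub_ne_zero.mpr hne)
  simp only [star_trivial] at this
  linarith

end Matrix

/-- **Sign gradient descent as an inverse-optimal algorithm (Section 7.2).**
Let `H` be symmetric positive definite (the Hessian metricizing the control set),
`w` a vector with all components nonzero (the gradient `∇g₀(q₁)`), and
`ζ = -sign(w)` the negative componentwise sign vector. Then the unique minimizer of
`u ↦ ⟨ζ, -H u⟩` over the ellipsoid `{u : ⟨u, H u⟩ ≤ Δ}`, `Δ > 0`, is
`u* = √(Δ / ⟨ζ, H ζ⟩) • ζ`, a strictly positive multiple of `-sign(w)`; consequently,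
the update `q₁ ← q₁ + h u*` with `h > 0` is the sign gradient descent iteration
`q₁ ← q₁ - α • sign(w)` with `α = h √(Δ / ⟨ζ, H ζ⟩) > 0`. -/
theorem sign_gradient_descent_inverse_optimal {n : ℕ} (hn : 0 < n)
    (H : Matrix (Fin n) (Fin n) ℝ) (hH : H.PosDef)
    (w : Fin n → ℝ) (hw : ∀ i, w i ≠ 0)
    (ζ : Fin n → ℝ) (hζ : ∀ i, ζ i = -Real.sign (w i))
    (Δ : ℝ) (hΔ : 0 < Δ)
    (σ : ℝ) (hσ : σ = Real.sqrt (Δ / (ζ ⬝ᵥ (H *ᵥ ζ))))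
    (ustar : Fin n → ℝ) (hustar : ustar = σ • ζ) :
    0 < σ ∧
    ustar ⬝ᵥ (H *ᵥ ustar) ≤ Δ ∧
    (∀ u : Fin n → ℝ, u ⬝ᵥ (H *ᵥ u) ≤ Δ →
      ζ ⬝ᵥ (-(H *ᵥ ustar)) ≤ ζ ⬝ᵥ (-(H *ᵥ u))) ∧
    (∀ u : Fin n → ℝ, u ⬝ᵥ (H *ᵥ u) ≤ Δ →
      ζ ⬝ᵥ (-(H *ᵥ u)) = ζ ⬝ᵥ (-(H *ᵥ ustar)) → u = ustar) ∧
    (∀ h : ℝ, 0 < h → ∀ q₁ : Fin n → ℝ,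
      q₁ + h • ustar = q₁ - (h * σ) • (fun i => Real.sign (w i)) ∧ 0 < h * σ) := by
  have hζ0 : ζ ≠ 0 := fun h0 => hw ⟨0, hn⟩ (by simpa [hζ] using congrFun h0 ⟨0, hn⟩)
  have hc : 0 < ζ ⬝ᵥ H *ᵥ ζ := by simpa using hH.dotProduct_mulVec_pos hζ0
  have hσpos : 0 < σ := hσ ▸ Real.sqrt_pos.mpr (div_pos hΔ hc)
  have hσsq : σ ^ 2 * (ζ ⬝ᵥ H *ᵥ ζ) = Δ := by
    rw [hσ, Real.sq_sqrt (div_pos hΔ hc).le, div_mul_cancel₀ _ hc.ne']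
  subst hustar
  refine ⟨hσpos, ?_, fun u hu => ?_, fun u hu h => ?_, fun h hh q₁ => ⟨?_, mul_pos hh hσpos⟩⟩
  · rw [← hσsq, mulVec_smul, dotProduct_smul, smul_dotProduct, smul_eq_mul, smul_eq_mul, sq,
      mul_assoc]
  · simpa only [dotProduct_neg, neg_le_neg_iff] using
      hH.posSemidef.dotProduct_mulVec_le_smul hσpos hσsq hu
  · exact hH.eq_smul_of_dotProduct_mulVec_eq hσsq hu
      (neg_inj.mp (by simpa only [dotProduct_neg] using h))
  · ext i
    simp only [Pi.add_apply, Pi.sub_apply, Pi.smul_apply, smul_eq_mul, hζ i]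
    ring
end
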